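/- arXiv:1705.10465 — 2 statements merged into one kernel-verified Lean document; each statement's English description precedes it below -/
import Mathlib

section
/- Let q be a prime power, n ≥ 2, and let S ⊆ 𝔽_q^n \ {0} be a union of lines through the origin (each minus the origin), each line meeting H₀ only in 0, with S nonempty. Then the chromatic number of the Cayley graph Cay(𝔽_q^n, S) equals q. -/
/-- The Cayley graph of an additive group with connection set `S`:
`u ~ v` iff `u ≠ v` and `u - v ∈ S` (symmetrized). For symmetric `S`
with `0 ∉ S` this is the usual Cayley graph. -/
def Cay {V : Type*} [AddCommGroup V] (S : Set V) : SimpleGraph V where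
  Adj u v := u ≠ v ∧ (u - v ∈ S ∨ v - u ∈ S)
  symm := ⟨fun u v h => ⟨h.1.symm, h.2.symm⟩⟩
  loopless := ⟨fun u h => h.1 rfl⟩

/-!
The last coordinate is an additive map that vanishes nowhere on `S`, so it is a proper
colouring of `Cay S` with `q` colours. Conversely, the points of any line spanned by
`v ∈ S` pairwise differ by nonzero multiples of `v`, which lie in `S`, so they form a
`q`-clique.
-/

namespace Cay

variable {V : Type*} [AddCommGroup V] {S : Set V}

def coloringOfAddMonoidHom {W : Type*} [AddCommGroup W] (φ : V →+ W)
    (hφ : ∀ v ∈ S, φ v ≠ 0) : (Cay S).Coloring W :=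
  SimpleGraph.Coloring.mk φ fun {u v} ⟨_, huv⟩ hcol => by
    rcases huv with h | h <;> exact hφ _ h (by rw [map_sub, hcol, sub_self])

def lineHom {K : Type*} [Field K] [Module K V]
    (hS : ∀ v ∈ S, ∀ c : K, c ≠ 0 → c • v ∈ S) {v : V} (hv : v ∈ S) (hv0 : v ≠ 0) :
    (⊤ : SimpleGraph K) →g Cay S where
  toFun c := c • v
  map_rel' {c d} hcd :=
    ⟨fun h => hcd (smul_left_injective K hv0 h),
      Or.inl (sub_smul c d v ▸ hS v hv (c - d) (sub_ne_zero.mpr hcd))⟩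

theorem card_le_chromaticNumber {K : Type*} [Field K] [Fintype K] [Module K V]
    (hS : ∀ v ∈ S, ∀ c : K, c ≠ 0 → c • v ∈ S) {v : V} (hv : v ∈ S) (hv0 : v ≠ 0) :
    (Fintype.card K : ℕ∞) ≤ (Cay S).chromaticNumber :=
  SimpleGraph.chromaticNumber_top (V := K) ▸
    SimpleGraph.chromaticNumber_mono_of_hom (lineHom hS hv hv0)

theorem chromaticNumber_le_card {W : Type*} [AddCommGroup W] [Fintype W] (φ : V →+ W)
    (hφ : ∀ v ∈ S, φ v ≠ 0) : (Cay S).chromaticNumber ≤ Fintype.card W :=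
  (coloringOfAddMonoidHom φ hφ).colorable.chromaticNumber_le

end Cay

/-- if `S ⊆ 𝔽_q^n \ {0}` is a nonempty union of punctured lines through
the origin, each line meeting `H₀` only in `0`, then `χ(Cay(𝔽_q^n, S)) = q`. -/
theorem stmt1 (F : Type*) [Field F] [Fintype F] (n : ℕ) (hn : 2 ≤ n)
    (S : Set (Fin n → F)) (hne : S.Nonempty)
    (hscal : ∀ v ∈ S, ∀ c : F, c ≠ 0 → c • v ∈ S)
    (hH0 : ∀ v ∈ S, v ⟨n - 1, by omega⟩ ≠ 0) :
    (Cay S).chromaticNumber = Fintype.card F := by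
  obtain ⟨v, hv⟩ := hne
  have hv0 : v ≠ 0 := fun h => hH0 v hv (by rw [h, Pi.zero_apply])
  exact le_antisymm (Cay.chromaticNumber_le_card (Pi.evalAddMonoidHom _ _) hH0)
    (Cay.card_le_chromaticNumber hscal hv hv0)
end

section
/- Let G be a finite permutation group on a set Ω containing a regular abelian subgroup A that is self-normalizing and proper in G. Then |Ω| is not a prime power. -/
/-!
If `|Ω| = p ^ k`, the regular subgroup `A` has order `p ^ k`. A self-normalizing `p`-subgroup
is a Sylow subgroup, since inside the nilpotent Sylow subgroup containing it a proper subgroup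
is strictly smaller than its normalizer. As `A` is abelian, `N_G(A) = A ≤ C_G(A)`, so
Burnside's transfer theorem gives a normal `p`-complement `N`. The orbits of `N` are blocks of
the transitive group `G`, so their common size divides both `p ^ k` and `|N|` and is `1`: `N`
acts trivially, hence `N = 1` and `G = A`.
-/

open MulAction Subgroup

section

variable {G Ω : Type*} [Group G] [MulAction G Ω]

theorem MulAction.card_eq_of_stabilizer_eq_bot [IsPretransitive G Ω] {x : Ω}
    (h : stabilizer G x = ⊥) : Nat.card G = Nat.card Ω := by
  rw [← index_stabilizer_of_transitive G x, h, index_bot]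

theorem MulAction.normal_eq_bot_of_coprime [FaithfulSMul G Ω] [IsPretransitive G Ω]
    (N : Subgroup G) [N.Normal] (hN : (Nat.card N).Coprime (Nat.card Ω)) : N = ⊥ := by
  have hfix (n : N) (x : Ω) : n • x = x := by
    have horbit : (orbit N x).ncard = 1 :=
      Nat.eq_one_of_dvd_coprimes hN (index_stabilizer N x ▸ index_dvd_card _)
        ((IsBlock.orbit_of_normal x).ncard_dvd_card ⟨x, mem_orbit_self x⟩)
    obtain ⟨y, hy⟩ := Set.ncard_eq_one.mp horbit
    have hnx : n • x ∈ orbit N x := mem_orbit x n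
    have hx : x ∈ orbit N x := mem_orbit_self x
    rw [hy] at hnx hx
    exact hnx.trans hx.symm
  refine (eq_bot_iff_forall N).mpr fun n hn => eq_of_smul_eq_smul (α := Ω) fun x => ?_
  rw [one_smul]
  exact hfix ⟨n, hn⟩ x

theorem IsPGroup.exists_sylow_eq_of_normalizer_eq [Finite G] {p : ℕ} [Fact p.Prime]
    {H : Subgroup G} (hH : IsPGroup p H) (hN : normalizer (H : Set G) = H) :
    ∃ P : Sylow p G, (P : Subgroup G) = H := by
  obtain ⟨P, hHP⟩ := hH.exists_le_sylow
  have : Group.IsNilpotent P := P.isPGroup'.isNilpotent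
  have htop : H.subgroupOf P = ⊤ :=
    normalizerCondition_iff_only_full_group_self_normalizing.mp
      Group.normalizerCondition_of_isNilpotent
      _ (by rw [← subgroupOf_normalizer_eq hHP, hN])
  exact ⟨P, le_antisymm (subgroupOf_eq_top.mp htop) hHP⟩

theorem Sylow.eq_top_of_normalizer_le_centralizer [Finite G] [FaithfulSMul G Ω]
    [IsPretransitive G Ω] {p k : ℕ} [Fact p.Prime] (hΩ : Nat.card Ω = p ^ k) (P : Sylow p G)
    (hP : normalizer (P : Set G) ≤ centralizer (P : Set G)) : (P : Subgroup G) = ⊤ := by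
  have hker : (MonoidHom.transferSylow P hP).ker = ⊥ := by
    refine normal_eq_bot_of_coprime _ (hΩ ▸ Nat.Coprime.pow_right k ?_)
    exact ((Nat.Prime.coprime_iff_not_dvd Fact.out).mpr
      (MonoidHom.not_dvd_card_ker_transferSylow P hP)).symm
  exact isComplement'_bot_left.mp (hker ▸ MonoidHom.ker_transferSylow_isComplement' P hP)

theorem Subgroup.eq_top_of_isPGroup_of_normalizer_eq [Finite G] [FaithfulSMul G Ω]
    [IsPretransitive G Ω] {p k : ℕ} [Fact p.Prime] (hΩ : Nat.card Ω = p ^ k) (A : Subgroup G)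
    [IsMulCommutative A] (hA : IsPGroup p A) (hN : normalizer (A : Set G) = A) : A = ⊤ := by
  obtain ⟨P, rfl⟩ := hA.exists_sylow_eq_of_normalizer_eq hN
  exact P.eq_top_of_normalizer_le_centralizer hΩ (hN.le.trans (le_centralizer _))

end

/-- Dobson, Theorem 4.2: a finite permutation group `G` on `Ω` with a
proper, self-normalizing, regular abelian subgroup `A` forces `|Ω|` not to be a prime
power. -/
theorem stmt7 (Ω : Type*) [Finite Ω] (G A : Subgroup (Equiv.Perm Ω))
    (hAG : A < G)
    (htrans : ∀ x y : Ω, ∃ a ∈ A, a x = y)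
    (hfree : ∀ a ∈ A, (∃ x : Ω, a x = x) → a = 1)
    (habel : ∀ a ∈ A, ∀ b ∈ A, a * b = b * a)
    (hselfnorm : ∀ g ∈ G, (∀ a ∈ A, g * a * g⁻¹ ∈ A) → g ∈ A) :
    ¬ IsPrimePow (Nat.card Ω) := by
  rintro ⟨p, k, hp, -, hcard⟩
  replace hp := Nat.prime_iff.mpr hp
  have : Fact p.Prime := ⟨hp⟩
  have : IsPretransitive A Ω :=
    ⟨fun x y => let ⟨a, ha, hxy⟩ := htrans x y; ⟨⟨a, ha⟩, hxy⟩⟩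
  have : IsPretransitive G Ω :=
    ⟨fun x y => let ⟨a, ha, hxy⟩ := htrans x y; ⟨⟨a, hAG.le ha⟩, hxy⟩⟩
  obtain ⟨x⟩ : Nonempty Ω := Nat.card_pos_iff.mp (hcard ▸ pow_pos hp.pos k) |>.1
  have hcardA : Nat.card A = p ^ k := hcard ▸ card_eq_of_stabilizer_eq_bot (x := x)
    ((eq_bot_iff_forall _).mpr fun a ha => Subtype.ext (hfree a a.2 ⟨x, ha⟩))
  have : IsMulCommutative (A.subgroupOf G) :=
    ⟨⟨fun a b => Subtype.ext (Subtype.ext (habel _ a.2 _ b.2))⟩⟩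
  have hpA : IsPGroup p (A.subgroupOf G) :=
    .of_card ((Nat.card_congr (subgroupOfEquivOfLe hAG.le).toEquiv).trans hcardA)
  have hN : normalizer (A.subgroupOf G : Set G) = A.subgroupOf G := by
    refine le_antisymm (fun (g : G) hg => hselfnorm g g.2 fun a ha => ?_) le_normalizer
    exact ((mem_normalizer_iff.mp hg) ⟨a, hAG.le ha⟩).mp ha
  exact hAG.not_ge (subgroupOf_eq_top.mp (eq_top_of_isPGroup_of_normalizer_eq hcard.symm _ hpA hN))
end
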